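/- For real γ > 0, the series S = γ² · Σ_{j,k ≥ 0} 2^{−(j+k)} · ((j+k)!/(γ)_{j+k+2}) · C(j+k, j) converges and equals 1, where C(j+k,j) is the binomial coefficient. Equivalently, γ² · Σ_{N=0}^∞ (N!/(γ)_{N+2}) = 1, after summing over diagonals j+k = N (using Σ_{j=0}^N C(N,j) = 2^N). -/

import Mathlib

/-- Pochhammer symbol `(γ)_n = γ(γ+1)⋯(γ+n−1)`. -/
noncomputable def poch (γ : ℝ) (n : ℕ) : ℝ := ∏ i ∈ Finset.range n, (γ + i)

/-!
Put `a N = γ · N! / (γ)_{N+1}`. Since `(γ)_{N+2} = (γ)_{N+1} (γ + N + 1)`, the diagonal terms are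
`γ² · N! / (γ)_{N+2} = a N - a (N + 1)`, so the diagonal series telescopes to `a 0 - lim a = 1`:
by Euler's limit formula `N^γ · N! / (γ)_{N+1} → Γ(γ)`, hence `a N → 0`.
The double series spreads the `N`-th diagonal term over `j + k = N` with the binomial weights
`2^{-N} C(N, j)`, which sum to `1`; all terms being nonnegative, it may be summed by diagonals.
-/

open Filter Topology Finset

theorem hasSum_of_hasSum_sum_antidiagonal_of_nonneg {A : Type*} [AddMonoid A]
    [HasAntidiagonal A] {f : A × A → ℝ} (hf : 0 ≤ f) {a : ℝ}
    (h : HasSum (fun n ↦ ∑ p ∈ antidiagonal n, f p) a) : HasSum f a := by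
  rw [← HasAntidiagonal.sigmaAntidiagonalEquivProd.hasSum_iff]
  have hfiber (n : A) : HasSum (fun p : antidiagonal n ↦ f p) (∑ p ∈ antidiagonal n, f p) :=
    (antidiagonal n).hasSum f
  refine h.sigma_of_hasSum hfiber ((summable_sigma_of_nonneg fun _ ↦ hf _).2
    ⟨fun n ↦ (hfiber n).summable, ?_⟩)
  exact h.summable.congr fun n ↦ (hfiber n).tsum_eq.symm

theorem sum_antidiagonal_half_pow_mul_choose (n : ℕ) :
    ∑ p ∈ antidiagonal n, (1 / 2 : ℝ) ^ (p.1 + p.2) * ((p.1 + p.2).choose p.1 : ℝ) = 1 := by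
  calc ∑ p ∈ antidiagonal n, (1 / 2 : ℝ) ^ (p.1 + p.2) * ((p.1 + p.2).choose p.1 : ℝ)
      = ∑ p ∈ antidiagonal n, n.choose p.1 • ((1 / 2 : ℝ) ^ p.1 * (1 / 2) ^ p.2) := by
        refine sum_congr rfl fun p hp ↦ ?_
        rw [← mem_antidiagonal.1 hp, nsmul_eq_mul, pow_add]
        ring
    _ = 1 := by rw [← (Commute.all _ _).add_pow']; norm_num

theorem hasSum_half_pow_mul_choose_mul_of_nonneg {b : ℕ → ℝ} (hb : ∀ n, 0 ≤ b n) {a : ℝ}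
    (h : HasSum b a) :
    HasSum (fun p : ℕ × ℕ ↦
      (1 / 2 : ℝ) ^ (p.1 + p.2) * ((p.1 + p.2).choose p.1 : ℝ) * b (p.1 + p.2)) a := by
  refine hasSum_of_hasSum_sum_antidiagonal_of_nonneg
    (fun p ↦ by have := hb (p.1 + p.2); positivity) ?_
  convert h using 1 with n
  ext n
  calc ∑ p ∈ antidiagonal n, (1 / 2 : ℝ) ^ (p.1 + p.2) * ((p.1 + p.2).choose p.1 : ℝ) * b (p.1 + p.2)
      = (∑ p ∈ antidiagonal n, (1 / 2 : ℝ) ^ (p.1 + p.2) * ((p.1 + p.2).choose p.1 : ℝ)) * b n := by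
        rw [sum_mul]
        exact sum_congr rfl fun p hp ↦ by rw [mem_antidiagonal.1 hp]
    _ = b n := by rw [sum_antidiagonal_half_pow_mul_choose, one_mul]

theorem Antitone.hasSum_sub_succ {a : ℕ → ℝ} (ha : Antitone a) {l : ℝ}
    (hl : Tendsto a atTop (𝓝 l)) : HasSum (fun n ↦ a n - a (n + 1)) (a 0 - l) := by
  rw [hasSum_iff_tendsto_nat_of_nonneg fun n ↦ sub_nonneg.2 (ha n.le_succ),
    funext (sum_range_sub' a)]
  exact tendsto_const_nhds.sub hl

lemma poch_succ (γ : ℝ) (n : ℕ) : poch γ (n + 1) = poch γ n * (γ + n) :=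
  prod_range_succ _ _

lemma poch_pos {γ : ℝ} (hγ : 0 < γ) (n : ℕ) : 0 < poch γ n :=
  prod_pos fun _ _ ↦ by positivity

lemma factorial_div_poch_succ_eq_gammaSeq_div {γ : ℝ} {n : ℕ} (hn : n ≠ 0) :
    n.factorial / poch γ (n + 1) = Real.GammaSeq γ n / (n : ℝ) ^ γ := by
  have : (n : ℝ) ^ γ ≠ 0 := (Real.rpow_pos_of_pos (by positivity) γ).ne'
  rw [Real.GammaSeq, poch]
  field_simp

lemma tendsto_factorial_div_poch_succ {γ : ℝ} (hγ : 0 < γ) :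
    Tendsto (fun n : ℕ ↦ n.factorial / poch γ (n + 1)) atTop (𝓝 0) := by
  have hpow : Tendsto (fun n : ℕ ↦ ((n : ℝ) ^ γ)⁻¹) atTop (𝓝 0) :=
    (tendsto_rpow_atTop hγ).comp tendsto_natCast_atTop_atTop |>.inv_tendsto_atTop
  have hlim := (Real.GammaSeq_tendsto_Gamma γ).mul hpow
  rw [mul_zero] at hlim
  refine hlim.congr' ?_
  filter_upwards [eventually_ne_atTop 0] with n hn
  rw [factorial_div_poch_succ_eq_gammaSeq_div hn, div_eq_mul_inv]

lemma sq_mul_factorial_div_poch_eq_sub {γ : ℝ} (hγ : 0 < γ) (n : ℕ) :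
    γ ^ 2 * (n.factorial / poch γ (n + 2)) =
      γ * (n.factorial / poch γ (n + 1)) - γ * ((n + 1).factorial / poch γ (n + 1 + 1)) := by
  have := poch_pos hγ (n + 1)
  rw [poch_succ γ (n + 1), Nat.factorial_succ]
  push_cast
  field_simp
  ring

theorem hasSum_sq_mul_factorial_div_poch {γ : ℝ} (hγ : 0 < γ) :
    HasSum (fun n : ℕ ↦ γ ^ 2 * (n.factorial / poch γ (n + 2))) 1 := by
  set a : ℕ → ℝ := fun n ↦ γ * (n.factorial / poch γ (n + 1))
  have ha : Antitone a := antitone_nat_of_succ_le fun n ↦ by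
    have := poch_pos hγ (n + 2)
    rw [← sub_nonneg, ← sq_mul_factorial_div_poch_eq_sub hγ]
    positivity
  have h0 : a 0 = 1 := by simp [a, poch, hγ.ne']
  have hlim : Tendsto a atTop (𝓝 0) := by
    simpa using (tendsto_factorial_div_poch_succ hγ).const_mul γ
  rw [funext (sq_mul_factorial_div_poch_eq_sub hγ)]
  simpa only [h0, sub_zero] using ha.hasSum_sub_succ hlim

theorem cyclicity_series (γ : ℝ) (hγ : 0 < γ) :
    HasSum (fun p : ℕ × ℕ =>
        γ ^ 2 * (1 / 2 : ℝ) ^ (p.1 + p.2) * (((p.1 + p.2).factorial : ℝ) / poch γ (p.1 + p.2 + 2)) *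
          ((p.1 + p.2).choose p.1 : ℝ)) 1 ∧
      HasSum (fun N : ℕ => γ ^ 2 * ((N.factorial : ℝ) / poch γ (N + 2))) 1 := by
  have hdiag := hasSum_sq_mul_factorial_div_poch hγ
  refine ⟨?_, hdiag⟩
  convert hasSum_half_pow_mul_choose_mul_of_nonneg (fun n ↦ ?_) hdiag using 2 with p
  · ring
  · have := poch_pos hγ (n + 2)
    positivity
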